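/- Let z: ℝ → ℝ² be C², 1-periodic, injective on [0,1), with |z_s(s)| = L > 0 and z_s(s) · z_ss(s) = 0 for all s, and suppose Γ := Γ(z) ∈ L^∞(𝕋²). Then: (i) for every s and every s_* ∉ ℤ, the map s_* ↦ Γ(s,s_*) is differentiable with ∂_{s_*}Γ(s,s_*) = −Γ(s,s_*)³ · (𝒟z(s,s_*)/s̄in(s_*)) · ( (z_s(s+s_*) s̄in(s_*) − 𝒟z(s,s_*) cos(πs_*)) / s̄in(s_*)² ); (ii) ∂_{s_*}Γ(s,s_*) → 0 as s_* → 0, so setting ∂_{s_*}Γ(s,0) := 0 makes ∂_{s_*}Γ continuous; and (iii) Γ(s,s_*) = 1/L + s_* ∫₀¹ (∂_{s_*}Γ)(s,(1−τ)s_*) dτ for all (s,s_*). -/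

import Mathlib

/- STATEMENT 4: (Proposition: Expansion of Γ.) For a C², 1-periodic, simple curve z with
uniform speed |zₛ| ≡ L > 0, zₛ·zₛₛ ≡ 0, satisfying the arc-chord condition: (i) for
s_* ∉ ℤ, s_* ↦ Γ(s,s_*) is differentiable with the explicit derivative
∂Γ(s,s_*) = −Γ³ (𝒟z/s̄in)·((zₛ(s+s_*)s̄in − 𝒟z cos(πs_*))/s̄in²); (ii) ∂Γ(s,s_*) → 0 as
s_* → 0, so setting ∂Γ(s,0) := 0 makes ∂Γ continuous; (iii) Γ(s,s_*) = 1/L +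
s_* ∫₀¹ ∂Γ(s,(1−τ)s_*) dτ.  Here s̄in(s) = sin(πs)/π and 𝒟w(s,s_*) = w(s+s_*) − w(s). -/

open Real MeasureTheory intervalIntegral
open scoped RealInnerProductSpace

noncomputable section

abbrev E2 := EuclideanSpace ℝ (Fin 2)

open scoped Classical in
/-- The arc-chord function Γ(z). -/
noncomputable def arcChord (z : ℝ → E2) (s t : ℝ) : ℝ :=
  if ∃ n : ℤ, t = (n : ℝ) then ‖deriv z s‖⁻¹
  else |Real.sin (π * t)| / (π * ‖z (s + t) - z s‖)

open scoped Classical in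
/-- The partial derivative ∂_{s_*}Γ(z), given by the explicit formula off ℤ and
extended by 0 at s_* ∈ ℤ. -/
noncomputable def dArcChord (z : ℝ → E2) (s t : ℝ) : ℝ :=
  if ∃ n : ℤ, t = (n : ℝ) then 0
  else
    -(arcChord z s t) ^ 3 *
      ⟪(Real.sin (π * t) / π)⁻¹ • (z (s + t) - z s),
        ((Real.sin (π * t) / π) ^ 2)⁻¹ •
          ((Real.sin (π * t) / π) • deriv z (s + t)
            - Real.cos (π * t) • (z (s + t) - z s))⟫

end

open Filter Topology Asymptotics

/-!
Off the integers, Γ = |s̄in| / |𝒟z| is differentiable because |𝒟z| ≠ 0 by the arc-chord bound.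
There |∂Γ(s,u)| = |q(u)| / |𝒟z(s,u)|³ with q(u) = s̄in(u) ⟨𝒟z, z_s(s+u)⟩ − cos(πu) |𝒟z|², and
|𝒟z(s,u)| ≍ |u| because z_s(s) ≠ 0, so (ii) amounts to q = o(u³). Integrating little-o bounds
with the mean value inequality, this follows from
q' = −m + s̄in ⟨𝒟z, z_ss(s+u)⟩ + π sin(πu) |𝒟z|², where m = ⟨𝒟z, z_s(s+u)⟩ cos(πu) − L² s̄in(u)
has m' = ⟨𝒟z, z_ss(s+u)⟩ cos(πu) − π ⟨𝒟z, z_s(s+u)⟩ sin(πu): constant speed cancels the |z_s|²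
terms, and z_s(s) ⊥ z_ss(s) makes ⟨𝒟z, z_ss(s+u)⟩ = o(u). Both Γ and ∂Γ are 1-periodic in s_*,
so continuity at 0 gives continuity everywhere, and (iii) is the fundamental theorem of calculus
with the integers as a countable exceptional set.
-/

theorem eq_add_smul_integral_of_hasDerivAt_off_countable {E : Type*} [NormedAddCommGroup E]
    [NormedSpace ℝ E] [CompleteSpace E] {f f' : ℝ → E} {S : Set ℝ} (hS : S.Countable)
    (hf : Continuous f) (hf' : Continuous f') (hderiv : ∀ x ∉ S, HasDerivAt f (f' x) x)
    (t : ℝ) : f t = f 0 + t • ∫ τ in (0 : ℝ)..1, f' ((1 - τ) * t) := by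
  have hflip : ∫ τ in (0 : ℝ)..1, f' ((1 - τ) * t) = ∫ τ in (0 : ℝ)..1, f' (τ * t) := by
    simpa using integral_comp_sub_left (a := 0) (b := 1) (fun τ => f' (τ * t)) (1 : ℝ)
  rw [hflip, smul_integral_comp_mul_right, zero_mul, one_mul,
    integral_eq_of_hasDerivAt_off_countable f f' hS hf.continuousOn
      (fun x hx => hderiv x hx.2) (hf'.intervalIntegrable 0 t)]
  abel

theorem Function.Periodic.continuous_of_continuousAt_zero {α : Type*} [TopologicalSpace α]
    {f : ℝ → α} (hf : Function.Periodic f 1) (h0 : ContinuousAt f 0)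
    (hnonint : ∀ t : ℝ, (¬ ∃ n : ℤ, t = n) → ContinuousAt f t) : Continuous f := by
  refine continuous_iff_continuousAt.mpr fun t => ?_
  by_cases ht : ∃ n : ℤ, t = n
  · obtain ⟨n, rfl⟩ := ht
    have hshift : (fun u => f (u - n)) = f := funext fun u => by simpa using hf.sub_int_mul_eq n
    rw [← hshift]
    exact ContinuousAt.comp (by simpa using h0) (continuous_sub_right _).continuousAt
  · exact hnonint t ht

theorem isLittleO_pow_succ_of_hasDerivAt {E : Type*} [NormedAddCommGroup E] [NormedSpace ℝ E]
    {f f' : ℝ → E} {n : ℕ} (hf : ∀ x, HasDerivAt f (f' x) x) (h0 : f 0 = 0)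
    (h : f' =o[𝓝 0] (· ^ n)) : f =o[𝓝 0] (· ^ (n + 1)) := by
  refine IsLittleO.of_bound fun c hc => ?_
  obtain ⟨ε, hε, hball⟩ := Metric.eventually_nhds_iff_ball.mp (h.def hc)
  filter_upwards [Metric.ball_mem_nhds 0 hε] with x hx
  have hbound : ∀ y ∈ Metric.closedBall (0 : ℝ) ‖x‖, ‖f' y‖ ≤ c * ‖x‖ ^ n := by
    intro y hy
    rw [mem_closedBall_zero_iff] at hy
    calc ‖f' y‖ ≤ c * ‖y ^ n‖ :=
          hball y (mem_ball_zero_iff.mpr (hy.trans_lt (mem_ball_zero_iff.mp hx)))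
      _ ≤ c * ‖x‖ ^ n := by rw [norm_pow]; gcongr
  have hmvt := (convex_closedBall (0 : ℝ) ‖x‖).norm_image_sub_le_of_norm_hasDerivWithin_le
    (fun y _ => (hf y).hasDerivWithinAt) hbound (x := 0) (y := x)
    (Metric.mem_closedBall_self (norm_nonneg x)) (by simp)
  rw [h0, sub_zero, sub_zero] at hmvt
  rwa [norm_pow, pow_succ, ← mul_assoc]

theorem tendsto_norm_div_norm_of_hasDerivAt {E F : Type*} [NormedAddCommGroup E]
    [NormedSpace ℝ E] [NormedAddCommGroup F] [NormedSpace ℝ F] {f : ℝ → E} {g : ℝ → F}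
    {a : E} {b : F} (hf : HasDerivAt f a 0) (hg : HasDerivAt g b 0) (hf0 : f 0 = 0)
    (hg0 : g 0 = 0) (hb : b ≠ 0) :
    Tendsto (fun u => ‖f u‖ / ‖g u‖) (𝓝[≠] 0) (𝓝 (‖a‖ / ‖b‖)) := by
  refine ((hasDerivAt_iff_tendsto_slope.mp hf).norm.div (hasDerivAt_iff_tendsto_slope.mp hg).norm
    (norm_ne_zero_iff.mpr hb)).congr' ?_
  filter_upwards [self_mem_nhdsWithin] with u hu
  have hu' : ‖u‖⁻¹ ≠ 0 := by simpa using hu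
  simp only [slope_def_module, hf0, hg0, sub_zero, norm_smul, norm_inv]
  exact mul_div_mul_left _ _ hu'

theorem hasDerivAt_sin_pi_mul_div_pi (u : ℝ) :
    HasDerivAt (fun u => sin (π * u) / π) (cos (π * u)) u :=
  ((((hasDerivAt_id' u).const_mul π).sin).div_const π).congr_deriv (by field_simp)

theorem hasDerivAt_cos_pi_mul (u : ℝ) :
    HasDerivAt (fun u => cos (π * u)) (-π * sin (π * u)) u :=
  (((hasDerivAt_id' u).const_mul π).cos).congr_deriv (by ring)

theorem sin_pi_mul_isLittleO_one : (fun u : ℝ => sin (π * u)) =o[𝓝 0] (fun _ => (1 : ℝ)) :=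
  (isLittleO_one_iff ℝ).mpr
    ((continuous_sin.comp (continuous_const_mul π)).tendsto' 0 0 (by simp))

theorem cos_pi_mul_isBigO_one : (fun u : ℝ => cos (π * u)) =O[𝓝 0] (fun _ => (1 : ℝ)) :=
  isBigO_of_le _ fun u => by simpa using abs_cos_le_one (π * u)

theorem sin_pi_mul_div_pi_isBigO_id : (fun u : ℝ => sin (π * u) / π) =O[𝓝 0] id :=
  isBigO_of_le _ fun u => by
    rw [norm_div, Real.norm_of_nonneg pi_pos.le, div_le_iff₀ pi_pos, id, mul_comm]
    simpa [abs_mul, abs_of_pos pi_pos, mul_comm] using abs_sin_le_abs (x := π * u)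

section CurveExpansion

variable {F : Type*} [NormedAddCommGroup F] [InnerProductSpace ℝ F] {γ γ' γ'' : ℝ → F} {L : ℝ}

theorem isBigO_id_of_hasDerivAt {v : F} (hγ : HasDerivAt γ v 0) (hγ0 : γ 0 = 0) :
    γ =O[𝓝 0] id :=
  hγ.isBigO_sub.congr (fun u => by simp [hγ0]) fun u => sub_zero u

theorem id_isBigO_of_hasDerivAt {v : F} (hγ : HasDerivAt γ v 0) (hv : v ≠ 0) (hγ0 : γ 0 = 0) :
    id =O[𝓝 0] γ :=
  ((hγ.isTheta_sub hv).2.comp_tendsto (tendsto_id.prodMk tendsto_const_pure)).congr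
    (fun u => sub_zero u) fun u => by simp [hγ0]

theorem isLittleO_inner_of_orthogonal (hγ : HasDerivAt γ (γ' 0) 0) (hγ0 : γ 0 = 0)
    (hγ'' : ContinuousAt γ'' 0) (horth : ⟪γ' 0, γ'' 0⟫ = 0) :
    (fun u => ⟪γ u, γ'' u⟫) =o[𝓝 0] id := by
  have hr : (fun u => γ u - u • γ' 0) =o[𝓝 0] id :=
    (hasDerivAt_iff_isLittleO_nhds_zero.mp hγ).congr_left (by simp [hγ0])
  have hrem : (fun u => ⟪γ u - u • γ' 0, γ'' u⟫) =o[𝓝 0] id := by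
    refine (isBigO_of_le _ fun u => ?_).trans_isLittleO
      ((hr.norm_left.mul_isBigO (hγ''.tendsto.norm.isBigO_one ℝ)).congr_right
        fun u => mul_one (id u))
    simpa using abs_real_inner_le_norm _ _
  have hmain : (fun u => u * ⟪γ' 0, γ'' u⟫) =o[𝓝 0] id := by
    refine ((isBigO_refl id _).mul_isLittleO ((isLittleO_one_iff ℝ).mpr ?_)).congr_right
      fun u => mul_one (id u)
    simpa [horth] using ((continuousAt_const (y := γ' 0)).inner (𝕜 := ℝ) hγ'').tendsto
  refine (hrem.add hmain).congr_left fun u => ?_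
  rw [inner_sub_left, real_inner_smul_left]
  ring

variable (hγ : ∀ u, HasDerivAt γ (γ' u) u) (hγ' : ∀ u, HasDerivAt γ' (γ'' u) u)
  (hγ0 : γ 0 = 0) (hspeed : ∀ u, ‖γ' u‖ = L)

include hγ hγ' hspeed in
theorem hasDerivAt_inner_deriv (u : ℝ) :
    HasDerivAt (fun u => ⟪γ u, γ' u⟫) (L ^ 2 + ⟪γ u, γ'' u⟫) u :=
  ((hγ u).inner ℝ (hγ' u)).congr_deriv (by rw [real_inner_self_eq_norm_sq, hspeed, add_comm])

include hγ hγ0 hspeed in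
theorem inner_deriv_isBigO_id : (fun u => ⟪γ u, γ' u⟫) =O[𝓝 0] id := by
  refine (isBigO_of_le' (c := L) _ fun u => ?_).trans (isBigO_id_of_hasDerivAt (hγ 0) hγ0)
  simpa [hspeed, mul_comm] using abs_real_inner_le_norm (γ u) (γ' u)

include hγ hγ' hγ0 hspeed in
theorem isLittleO_inner_deriv_mul_cos_sub (hγ'' : ContinuousAt γ'' 0)
    (horth : ⟪γ' 0, γ'' 0⟫ = 0) :
    (fun u => ⟪γ u, γ' u⟫ * cos (π * u) - L ^ 2 * (sin (π * u) / π)) =o[𝓝 0] (· ^ 2) := by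
  refine isLittleO_pow_succ_of_hasDerivAt (f' := fun u =>
      ⟪γ u, γ'' u⟫ * cos (π * u) - π * (⟪γ u, γ' u⟫ * sin (π * u)))
    (fun u => ?_) (by simp [hγ0]) ?_
  · exact (((hasDerivAt_inner_deriv hγ hγ' hspeed u).mul (hasDerivAt_cos_pi_mul u)).sub
      ((hasDerivAt_sin_pi_mul_div_pi u).const_mul _)).congr_deriv (by ring)
  · have h1 := (isLittleO_inner_of_orthogonal (hγ 0) hγ0 hγ'' horth).mul_isBigO
      cos_pi_mul_isBigO_one
    have h2 := ((inner_deriv_isBigO_id hγ hγ0 hspeed).mul_isLittleO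
      sin_pi_mul_isLittleO_one).const_mul_left π
    exact (h1.sub h2).congr_right fun u => by simp

include hγ hγ' hγ0 hspeed in
theorem isLittleO_sin_mul_inner_deriv_sub (hγ'' : ContinuousAt γ'' 0)
    (horth : ⟪γ' 0, γ'' 0⟫ = 0) :
    (fun u => sin (π * u) / π * ⟪γ u, γ' u⟫ - cos (π * u) * ‖γ u‖ ^ 2) =o[𝓝 0] (· ^ 3) := by
  refine isLittleO_pow_succ_of_hasDerivAt (f' := fun u =>
      -(⟪γ u, γ' u⟫ * cos (π * u) - L ^ 2 * (sin (π * u) / π))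
        + sin (π * u) / π * ⟪γ u, γ'' u⟫ + π * (sin (π * u) * ‖γ u‖ ^ 2))
    (fun u => ?_) (by simp [hγ0]) ?_
  · exact (((hasDerivAt_sin_pi_mul_div_pi u).mul (hasDerivAt_inner_deriv hγ hγ' hspeed u)).sub
      ((hasDerivAt_cos_pi_mul u).mul (hγ u).norm_sq)).congr_deriv (by ring)
  · have h1 := isLittleO_inner_deriv_mul_cos_sub hγ hγ' hγ0 hspeed hγ'' horth
    have h2 := sin_pi_mul_div_pi_isBigO_id.mul_isLittleO
      (isLittleO_inner_of_orthogonal (hγ 0) hγ0 hγ'' horth)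
    have h3 := (sin_pi_mul_isLittleO_one.mul_isBigO
      ((isBigO_id_of_hasDerivAt (hγ 0) hγ0).norm_left.pow 2)).const_mul_left π
    refine (h1.neg_left.add (h2.congr_right fun u => ?_)).add (h3.congr_right fun u => ?_) <;>
      simp [sq]

end CurveExpansion

theorem sin_pi_mul_ne_zero_of_not_int {t : ℝ} (ht : ¬ ∃ n : ℤ, t = n) : sin (π * t) ≠ 0 := by
  rw [Ne, sin_eq_zero_iff]
  rintro ⟨n, hn⟩
  exact ht ⟨n, mul_left_cancel₀ pi_ne_zero (hn.symm.trans (mul_comm _ _))⟩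

theorem exists_int_add_one_eq_iff {t : ℝ} : (∃ n : ℤ, t + 1 = n) ↔ ∃ n : ℤ, t = n :=
  ⟨fun ⟨n, hn⟩ => ⟨n - 1, by push_cast; linarith⟩, fun ⟨n, hn⟩ => ⟨n + 1, by push_cast; linarith⟩⟩

theorem eventually_not_int {t : ℝ} (ht : ¬ ∃ n : ℤ, t = n) :
    ∀ᶠ u in 𝓝 t, ¬ ∃ n : ℤ, u = (n : ℝ) := by
  filter_upwards [Real.isOpen_compl_range_intCast.mem_nhds fun ⟨n, hn⟩ => ht ⟨n, hn.symm⟩]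
    with u hu ⟨n, hn⟩ using hu ⟨n, hn.symm⟩

theorem eventually_not_int_nhdsNE_zero : ∀ᶠ u in 𝓝[≠] (0 : ℝ), ¬ ∃ n : ℤ, u = (n : ℝ) := by
  filter_upwards [self_mem_nhdsWithin,
    mem_nhdsWithin_of_mem_nhds (Ioo_mem_nhds neg_one_lt_zero one_pos)] with u hu0 hu ⟨n, hn⟩
  subst hn
  obtain ⟨h1, h2⟩ : (-1 : ℤ) < n ∧ n < 1 := by exact_mod_cast Set.mem_Ioo.mp hu
  obtain rfl : n = 0 := by omega
  simp at hu0

theorem Function.Periodic.deriv {E : Type*} [NormedAddCommGroup E] [NormedSpace ℝ E]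
    {f : ℝ → E} {c : ℝ} (hf : Function.Periodic f c) : Function.Periodic (_root_.deriv f) c :=
  fun u => by rw [← deriv_comp_add_const, show (fun x => f (x + c)) = f from funext hf]

section ArcChord

variable {z : ℝ → E2} {s t : ℝ}

theorem arcChord_zero : arcChord z s 0 = ‖deriv z s‖⁻¹ := by
  rw [arcChord, if_pos ⟨0, by simp⟩]

theorem arcChord_of_not_int (ht : ¬ ∃ n : ℤ, t = n) :
    arcChord z s t = |sin (π * t) / π| / ‖z (s + t) - z s‖ := by
  rw [arcChord, if_neg ht, abs_div, abs_of_pos pi_pos, div_div]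

theorem dArcChord_of_not_int (ht : ¬ ∃ n : ℤ, t = n) :
    dArcChord z s t = -arcChord z s t ^ 3 / (sin (π * t) / π) ^ 3 *
      (sin (π * t) / π * ⟪z (s + t) - z s, deriv z (s + t)⟫
        - cos (π * t) * ‖z (s + t) - z s‖ ^ 2) := by
  rw [dArcChord, if_neg ht, real_inner_smul_left, real_inner_smul_right, inner_sub_right,
    real_inner_smul_right, real_inner_smul_right, real_inner_self_eq_norm_sq]
  field_simp

theorem abs_dArcChord_of_not_int (ht : ¬ ∃ n : ℤ, t = n) :
    |dArcChord z s t| = |sin (π * t) / π * ⟪z (s + t) - z s, deriv z (s + t)⟫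
        - cos (π * t) * ‖z (s + t) - z s‖ ^ 2| / ‖z (s + t) - z s‖ ^ 3 := by
  have hS : sin (π * t) / π ≠ 0 := div_ne_zero (sin_pi_mul_ne_zero_of_not_int ht) pi_ne_zero
  rw [dArcChord_of_not_int ht, arcChord_of_not_int ht]
  generalize sin (π * t) / π = S at hS ⊢
  rw [abs_mul, abs_div, abs_neg, abs_pow, abs_pow, abs_div, abs_abs, abs_norm, div_pow]
  field_simp

theorem chord_ne_of_abs_sin_le {M : ℝ} (hM : |sin (π * t)| / π ≤ M * ‖z (s + t) - z s‖)
    (ht : ¬ ∃ n : ℤ, t = n) : z (s + t) ≠ z s := by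
  intro h
  rw [h, sub_self, norm_zero, mul_zero] at hM
  have := div_pos (abs_pos.mpr (sin_pi_mul_ne_zero_of_not_int ht)) pi_pos
  linarith

theorem hasDerivAt_chord (hz : Differentiable ℝ z) (u : ℝ) :
    HasDerivAt (fun u => z (s + u) - z s) (deriv z (s + u)) u :=
  ((hz (s + u)).hasDerivAt.comp_const_add s u).sub_const (z s)

theorem hasDerivAt_arcChord_of_not_int (hz : Differentiable ℝ z) (ht : ¬ ∃ n : ℤ, t = n)
    (hD : z (s + t) ≠ z s) : HasDerivAt (arcChord z s) (dArcChord z s t) t := by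
  -- writing Γ as a square root avoids differentiating the absolute value of s̄in
  have hsqrt : ∀ u : ℝ, (¬ ∃ n : ℤ, u = n) →
      arcChord z s u = √((sin (π * u) / π) ^ 2 / ‖z (s + u) - z s‖ ^ 2) := fun u hu => by
    rw [arcChord_of_not_int hu, sqrt_div (sq_nonneg _), sqrt_sq_eq_abs, sqrt_sq (norm_nonneg _)]
  have hN : ‖z (s + t) - z s‖ ^ 2 ≠ 0 := by simpa [sub_eq_zero] using hD
  have hS : sin (π * t) / π ≠ 0 := div_ne_zero (sin_pi_mul_ne_zero_of_not_int ht) pi_ne_zero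
  have hv := ((hasDerivAt_sin_pi_mul_div_pi t).pow 2).div (hasDerivAt_chord hz t).norm_sq hN
  refine ((hv.sqrt (div_ne_zero (pow_ne_zero 2 hS) hN)).congr_deriv ?_).congr_of_eventuallyEq
    ((eventually_not_int ht).mono hsqrt)
  simp only [Pi.pow_apply, Pi.div_apply]
  rw [← hsqrt t ht, dArcChord_of_not_int ht, arcChord_of_not_int ht]
  generalize sin (π * t) / π = S at hS ⊢
  have hN' : ‖z (s + t) - z s‖ ≠ 0 := by simpa using hN
  rcases hS.lt_or_gt with h | h
  · rw [abs_of_neg h]; field_simp; ring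
  · rw [abs_of_pos h]; field_simp; ring

theorem continuousAt_arcChord_zero (hz : Differentiable ℝ z) (hz' : deriv z s ≠ 0) :
    ContinuousAt (arcChord z s) 0 := by
  have hlim : Tendsto (fun u => ‖sin (π * u) / π‖ / ‖z (s + u) - z s‖) (𝓝[≠] 0)
      (𝓝 ‖deriv z s‖⁻¹) := by
    simpa using tendsto_norm_div_norm_of_hasDerivAt (hasDerivAt_sin_pi_mul_div_pi 0)
      (hasDerivAt_chord hz 0) (by simp) (by simp) (by simpa using hz')
  rw [← continuousWithinAt_compl_self, ContinuousWithinAt, arcChord_zero]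
  refine hlim.congr' ?_
  filter_upwards [eventually_not_int_nhdsNE_zero] with u hu
  rw [arcChord_of_not_int hu, Real.norm_eq_abs]

theorem tendsto_dArcChord_zero {L : ℝ} (hz : ContDiff ℝ 2 z) (hL : 0 < L)
    (hspeed : ∀ u, ‖deriv z u‖ = L) (horth : ⟪deriv z s, deriv (deriv z) s⟫ = 0) :
    Tendsto (dArcChord z s) (𝓝[≠] 0) (𝓝 0) := by
  have hγ := hasDerivAt_chord (s := s) (hz.differentiable (by norm_num))
  have hγ' (u : ℝ) : HasDerivAt (fun u => deriv z (s + u)) (deriv (deriv z) (s + u)) u :=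
    (hz.differentiable_deriv_two (s + u)).hasDerivAt.comp_const_add s u
  have hγ'' : ContinuousAt (fun u => deriv (deriv z) (s + u)) 0 :=
    ((hz.deriv' (n := 1)).continuous_deriv_one.comp (continuous_const_add s)).continuousAt
  have hq := isLittleO_sin_mul_inner_deriv_sub hγ hγ' (by simp) (fun u => hspeed (s + u)) hγ''
    (by simpa using horth)
  have hcmp : (· ^ 3 : ℝ → ℝ) =O[𝓝 0] (fun u => ‖z (s + u) - z s‖ ^ 3) :=
    (id_isBigO_of_hasDerivAt (hγ 0) (by rw [add_zero, ← norm_ne_zero_iff, hspeed]; exact hL.ne')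
      (by simp)).norm_right.pow 3
  have hlim := ((hq.trans_isBigO hcmp).tendsto_div_nhds_zero.mono_left
    (nhdsWithin_le_nhds (s := {0}ᶜ))).abs
  rw [abs_zero] at hlim
  refine squeeze_zero_norm' ?_ hlim
  filter_upwards [eventually_not_int_nhdsNE_zero] with u hu
  rw [Real.norm_eq_abs, abs_dArcChord_of_not_int hu, abs_div, abs_pow, abs_norm]

theorem arcChord_periodic (hper : Function.Periodic z 1) : Function.Periodic (arcChord z s) 1 :=
  fun t => by
  by_cases ht : ∃ n : ℤ, t = n
  · rw [arcChord, if_pos (exists_int_add_one_eq_iff.mpr ht), arcChord, if_pos ht]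
  · rw [arcChord_of_not_int ht, arcChord_of_not_int (mt exists_int_add_one_eq_iff.mp ht),
      ← add_assoc, hper, mul_add_one, sin_add_pi, neg_div, abs_neg]

theorem dArcChord_periodic (hper : Function.Periodic z 1) :
    Function.Periodic (dArcChord z s) 1 := fun t => by
  by_cases ht : ∃ n : ℤ, t = n
  · rw [dArcChord, if_pos (exists_int_add_one_eq_iff.mpr ht), dArcChord, if_pos ht]
  · rw [dArcChord_of_not_int ht, dArcChord_of_not_int (mt exists_int_add_one_eq_iff.mp ht),
      arcChord_periodic hper, ← add_assoc, hper, hper.deriv, mul_add_one, sin_add_pi,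
      cos_add_pi]
    ring

theorem continuous_arcChord (hz : Differentiable ℝ z) (hper : Function.Periodic z 1)
    (hz' : deriv z s ≠ 0) (hchord : ∀ t : ℝ, (¬ ∃ n : ℤ, t = n) → z (s + t) ≠ z s) :
    Continuous (arcChord z s) :=
  (arcChord_periodic hper).continuous_of_continuousAt_zero (continuousAt_arcChord_zero hz hz')
    fun t ht => (hasDerivAt_arcChord_of_not_int hz ht (hchord t ht)).continuousAt

theorem continuous_dArcChord (hz : ContDiff ℝ 1 z) (hper : Function.Periodic z 1)
    (hΓ : Continuous (arcChord z s)) (hlim : Tendsto (dArcChord z s) (𝓝[≠] 0) (𝓝 0)) :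
    Continuous (dArcChord z s) := by
  refine (dArcChord_periodic hper).continuous_of_continuousAt_zero ?_ fun t ht => ?_
  · rwa [← continuousWithinAt_compl_self, ContinuousWithinAt, dArcChord, if_pos ⟨0, by simp⟩]
  · have hS : sin (π * t) / π ≠ 0 := div_ne_zero (sin_pi_mul_ne_zero_of_not_int ht) pi_ne_zero
    have := hz.continuous
    have := hz.continuous_deriv_one
    exact ContinuousAt.congr (by fun_prop (disch := simp [hS])) <|
      (eventually_not_int ht).mono fun u hu => (if_neg hu).symm

end ArcChord

theorem expansion_of_arc_chord
    (z : ℝ → E2) (L : ℝ) (hL : 0 < L)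
    (hz : ContDiff ℝ 2 z)
    (hper : ∀ s, z (s + 1) = z s)
    (hspeed : ∀ s, ‖deriv z s‖ = L)
    (horth : ∀ s, ⟪deriv z s, deriv (deriv z) s⟫ = 0)
    (harcchord : ∃ M : ℝ, (∀ s t : ℝ, |Real.sin (π * t)| / π ≤ M * ‖z (s + t) - z s‖) ∧
      (∀ s : ℝ, 1 ≤ M * ‖deriv z s‖)) :
    (∀ s t : ℝ, (¬ ∃ n : ℤ, t = (n : ℝ)) →
      HasDerivAt (fun t' => arcChord z s t') (dArcChord z s t) t) ∧
    (∀ s : ℝ, Filter.Tendsto (fun t => dArcChord z s t)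
      (nhdsWithin 0 {(0 : ℝ)}ᶜ) (nhds 0)) ∧
    (∀ s : ℝ, Continuous fun t => dArcChord z s t) ∧
    (∀ s t : ℝ, arcChord z s t =
      L⁻¹ + t * ∫ τ in (0:ℝ)..1, dArcChord z s ((1 - τ) * t)) := by
  obtain ⟨M, hM, -⟩ := harcchord
  have hz1 : Differentiable ℝ z := hz.differentiable (by norm_num)
  have hchord (s t : ℝ) (ht : ¬ ∃ n : ℤ, t = n) : z (s + t) ≠ z s :=
    chord_ne_of_abs_sin_le (hM s t) ht
  have hderiv (s t : ℝ) (ht : ¬ ∃ n : ℤ, t = n) :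
      HasDerivAt (arcChord z s) (dArcChord z s t) t :=
    hasDerivAt_arcChord_of_not_int hz1 ht (hchord s t ht)
  have hΓ (s : ℝ) : Continuous (arcChord z s) :=
    continuous_arcChord hz1 hper (by rw [← norm_ne_zero_iff, hspeed]; exact hL.ne') (hchord s)
  have hlim (s : ℝ) := tendsto_dArcChord_zero hz hL hspeed (horth s)
  have hcont (s : ℝ) := continuous_dArcChord (hz.of_le one_le_two) hper (hΓ s) (hlim s)
  refine ⟨hderiv, hlim, hcont, fun s t => ?_⟩
  rw [eq_add_smul_integral_of_hasDerivAt_off_countable (Set.countable_range ((↑) : ℤ → ℝ))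
    (hΓ s) (hcont s) (fun x hx => hderiv s x fun ⟨n, hn⟩ => hx ⟨n, hn.symm⟩) t,
    arcChord_zero, hspeed, smul_eq_mul]
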